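/- Let f : ℝ^n → ℝ be μ-strongly convex, T : ℝ^n → ℝ^m linear with T*T positive definite, b ∈ ℝ^m, K ⊆ ℝ^m a regular closed convex cone; suppose the primal problem min{f(x) : Tx + b ∈ K} satisfies Slater's condition and has unique optimal solution x_opt. Let e ∈ int K and c_D > 0 be such that some dual optimal solution y satisfies ⟨e, y⟩ ≤ c_D, let h(y) := f*(T*y) + ⟨b,y⟩ and let d* be the dual optimal value. If y_k ∈ K* with ⟨e, y_k⟩ ≤ c_D and x_k := ∇f*(T* y_k), then for every k: ‖x_k − x_opt‖ ≤ sqrt(2‖T‖_op² / (μ · λ_min(T*T))) · sqrt(h(y_k) − d*), where λ_min(T*T) > 0 is the minimum eigenvalue of T*T. -/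

import Mathlib

/-!
Since `f` is `μ`-strongly convex, `f*` is differentiable and `∇f*(s)` is the maximiser `z` of
`⟪s, x⟫ - f x`, with the quadratic gap `⟪s, x⟫ - f x + μ/2 ‖x - z‖² ≤ f*(s)`. Taking `s = T* y`,
`x = x_opt` and using `⟪T x_opt + b, y⟫ ≥ 0` for `y ∈ K*` gives
`h(y) ≥ -f(x_opt) + μ/2 ‖∇f*(T* y) - x_opt‖²`. Under Slater's condition, separating
`int K × (-∞, f(x_opt))` from the image of the epigraph of `f` yields a Lagrange multiplier, so
`d* ≤ -f(x_opt)`. Hence `‖x_k - x_opt‖² ≤ 2/μ (h(y_k) - d*)`, and `2/μ ≤ 2‖T‖²/(μ λ)` because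
`λ ‖v‖² ≤ ‖T v‖² ≤ ‖T‖² ‖v‖²`.
-/

open scoped RealInnerProductSpace

/-- The Fenchel conjugate `f*(s) = sup_x (⟨s,x⟩ - f(x))`. -/
noncomputable def fenchelConj {n : ℕ} (f : EuclideanSpace ℝ (Fin n) → ℝ)
    (s : EuclideanSpace ℝ (Fin n)) : ℝ :=
  ⨆ x, (⟪s, x⟫ - f x)

/-- The dual objective `h(y) = f*(T*y) + ⟨b,y⟩`. -/
noncomputable def dualObj {n m : ℕ} (f : EuclideanSpace ℝ (Fin n) → ℝ)
    (T : EuclideanSpace ℝ (Fin n) →L[ℝ] EuclideanSpace ℝ (Fin m))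
    (b y : EuclideanSpace ℝ (Fin m)) : ℝ :=
  fenchelConj f (ContinuousLinearMap.adjoint T y) + ⟪b, y⟫

open Set Filter

section StrongConvex

variable {E : Type*} [NormedAddCommGroup E] {f : E → ℝ} {m : ℝ}

section NormedSpace

variable [NormedSpace ℝ E]

theorem StrongConvexOn.add_sq_le_of_forall_le (hf : StrongConvexOn univ m f) {z : E}
    (hz : ∀ x, f z ≤ f x) (x : E) : f z + m / 2 * ‖x - z‖ ^ 2 ≤ f x := by
  have hdecay : ∀ θ ∈ Ioc (0 : ℝ) 1, f z + m / 2 * (1 - θ) * ‖x - z‖ ^ 2 ≤ f x := by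
    rintro θ ⟨hθ, hθ1⟩
    have hmix := (hz _).trans
      (hf.2 (mem_univ x) (mem_univ z) hθ.le (sub_nonneg.2 hθ1) (add_sub_cancel θ 1))
    simp only [smul_eq_mul] at hmix
    nlinarith
  have hcont : Continuous fun θ : ℝ ↦ f z + m / 2 * (1 - θ) * ‖x - z‖ ^ 2 := by fun_prop
  have hlim := (hcont.tendsto 0).mono_left (nhdsWithin_le_nhds (s := Ioi 0))
  simp only [sub_zero, mul_one] at hlim
  exact le_of_tendsto hlim (eventually_of_mem (Ioc_mem_nhdsGT one_pos) hdecay)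

theorem ConvexOn.exists_neg_mul_one_add_norm_le [FiniteDimensional ℝ E]
    (hf : ConvexOn ℝ univ f) : ∃ C, ∀ x, -C * (1 + ‖x‖) ≤ f x := by
  have hcont : Continuous f := continuousOn_univ.1 (hf.continuousOn isOpen_univ)
  obtain ⟨C, hC⟩ := (isCompact_closedBall (0 : E) 1).exists_bound_of_continuousOn
    hcont.continuousOn
  have hball : ∀ u, ‖u‖ ≤ 1 → -C ≤ f u := fun u hu ↦
    (abs_le.1 (hC u (mem_closedBall_zero_iff.2 hu))).1
  have hf0 : |f 0| ≤ C := hC 0 (Metric.mem_closedBall_self zero_le_one)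
  refine ⟨2 * C, fun x ↦ ?_⟩
  rcases le_total ‖x‖ 1 with hx | hx
  · nlinarith [hball x hx, abs_nonneg (f 0), norm_nonneg x]
  · -- `‖x‖⁻¹ • x` is a convex combination of `x` and `0` lying on the unit sphere
    have hpos : 0 < ‖x‖ := one_pos.trans_le hx
    have hθ : ‖x‖⁻¹ * ‖x‖ = 1 := inv_mul_cancel₀ hpos.ne'
    have hcomb := hf.2 (mem_univ x) (mem_univ 0) (inv_nonneg.2 hpos.le)
      (sub_nonneg.2 (inv_le_one_of_one_le₀ hx)) (add_sub_cancel _ 1)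
    rw [smul_zero, add_zero, smul_eq_mul, smul_eq_mul] at hcomb
    have hsphere := hball (‖x‖⁻¹ • x) (by rw [norm_smul, norm_inv, norm_norm, hθ])
    have hscaled : ‖x‖ * -C ≤ f x + (‖x‖ - 1) * f 0 := by
      calc ‖x‖ * -C ≤ ‖x‖ * (‖x‖⁻¹ * f x + (1 - ‖x‖⁻¹) * f 0) :=
            mul_le_mul_of_nonneg_left (hsphere.trans hcomb) hpos.le
        _ = f x + (‖x‖ - 1) * f 0 := by field_simp
    nlinarith [mul_nonneg (sub_nonneg.2 hx) (sub_nonneg.2 ((le_abs_self (f 0)).trans hf0)),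
      (abs_nonneg (f 0)).trans hf0]

end NormedSpace

variable [InnerProductSpace ℝ E]

theorem StrongConvexOn.sub_inner (hf : StrongConvexOn univ m f) (s : E) :
    StrongConvexOn univ m fun x ↦ f x - ⟪s, x⟫ := by
  rw [strongConvexOn_iff_convex] at hf ⊢
  refine (hf.sub ((innerₗ E s).concaveOn convex_univ)).congr fun x _ ↦ ?_
  simp only [Pi.sub_apply, innerₗ_apply_apply]
  ring

theorem StrongConvexOn.tendsto_cocompact_atTop [FiniteDimensional ℝ E]
    (hf : StrongConvexOn univ m f) (hm : 0 < m) : Tendsto f (cocompact E) atTop := by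
  obtain ⟨C, hC⟩ := (strongConvexOn_iff_convex.1 hf).exists_neg_mul_one_add_norm_le
  have hq : Tendsto (fun r : ℝ ↦ r * (m / 2 * r - C) - C) atTop atTop :=
    tendsto_atTop_add_const_right _ _ <| tendsto_id.atTop_mul_atTop₀ <|
      tendsto_atTop_add_const_right _ _ <| tendsto_id.const_mul_atTop (by positivity)
  rw [← Metric.cobounded_eq_cocompact]
  refine tendsto_atTop_mono (fun x ↦ ?_) (hq.comp tendsto_norm_cobounded_atTop)
  have := hC x
  simp only [Function.comp_apply]
  linarith

theorem StrongConvexOn.exists_forall_le [FiniteDimensional ℝ E]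
    (hf : StrongConvexOn univ m f) (hm : 0 < m) : ∃ z, ∀ x, f z ≤ f x :=
  have hconv : ConvexOn ℝ univ f := hf.convexOn fun r ↦ by dsimp; positivity
  (continuousOn_univ.1 (hconv.continuousOn isOpen_univ)).exists_forall_le
    (hf.tendsto_cocompact_atTop hm)

end StrongConvex

theorem hasFDerivAt_of_norm_sub_le_sq {𝕜 E F : Type*} [NontriviallyNormedField 𝕜]
    [NormedAddCommGroup E] [NormedSpace 𝕜 E] [NormedAddCommGroup F] [NormedSpace 𝕜 F]
    {φ : E → F} {L : E →L[𝕜] F} {x : E} {C : ℝ}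
    (h : ∀ v, ‖φ (x + v) - φ x - L v‖ ≤ C * ‖v‖ ^ 2) : HasFDerivAt φ L x := by
  rw [hasFDerivAt_iff_isLittleO_nhds_zero]
  refine (Asymptotics.IsBigO.of_bound C (Eventually.of_forall fun v ↦ ?_)).trans_isLittleO
    (Asymptotics.isLittleO_norm_pow_id one_lt_two)
  simpa using h v

section Conjugate

variable {n : ℕ} {f : EuclideanSpace ℝ (Fin n) → ℝ} {s z : EuclideanSpace ℝ (Fin n)}

theorem fenchelConj_eq_of_forall_le (hz : ∀ x, ⟪s, x⟫ - f x ≤ ⟪s, z⟫ - f z) :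
    fenchelConj f s = ⟪s, z⟫ - f z :=
  le_antisymm (ciSup_le hz) (le_ciSup ⟨_, forall_mem_range.2 hz⟩ z)

variable {μ : ℝ}

theorem StrongConvexOn.exists_forall_inner_sub_le (hf : StrongConvexOn univ μ f) (hμ : 0 < μ)
    (s : EuclideanSpace ℝ (Fin n)) :
    ∃ z, ∀ x, ⟪s, x⟫ - f x ≤ ⟪s, z⟫ - f z := by
  obtain ⟨z, hz⟩ := (hf.sub_inner s).exists_forall_le hμ
  exact ⟨z, fun x ↦ by linarith [hz x]⟩

theorem StrongConvexOn.inner_sub_add_sq_le (hf : StrongConvexOn univ μ f)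
    (hz : ∀ x, ⟪s, x⟫ - f x ≤ ⟪s, z⟫ - f z)
    (x : EuclideanSpace ℝ (Fin n)) : ⟪s, x⟫ - f x + μ / 2 * ‖x - z‖ ^ 2 ≤ ⟪s, z⟫ - f z := by
  have := (hf.sub_inner s).add_sq_le_of_forall_le (fun x ↦ by linarith [hz x]) x
  linarith

theorem StrongConvexOn.hasGradientAt_fenchelConj (hf : StrongConvexOn univ μ f) (hμ : 0 < μ)
    (hz : ∀ x, ⟪s, x⟫ - f x ≤ ⟪s, z⟫ - f z) :
    HasGradientAt (fenchelConj f) z s := by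
  rw [hasGradientAt_iff_hasFDerivAt]
  refine hasFDerivAt_of_norm_sub_le_sq (C := 1 / (2 * μ)) fun v ↦ ?_
  rw [InnerProductSpace.toDual_apply_apply, fenchelConj_eq_of_forall_le hz, Real.norm_eq_abs,
    abs_le]
  obtain ⟨w, hw⟩ := hf.exists_forall_inner_sub_le hμ (s + v)
  have hlow := hw z
  have hgap := hf.inner_sub_add_sq_le hz w
  have hcs : ⟪v, w - z⟫ ≤ ‖v‖ * ‖w - z‖ := real_inner_le_norm _ _
  -- AM–GM: `‖v‖ ‖w - z‖ ≤ μ/2 ‖w - z‖² + ‖v‖² / (2μ)`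
  have hamgm : ‖v‖ * ‖w - z‖ ≤ μ / 2 * ‖w - z‖ ^ 2 + 1 / (2 * μ) * ‖v‖ ^ 2 := by
    have := sq_nonneg (‖v‖ - μ * ‖w - z‖)
    field_simp
    nlinarith
  rw [fenchelConj_eq_of_forall_le hw]
  simp only [inner_add_left, inner_sub_right, real_inner_comm z v] at hlow hcs ⊢
  have : 0 ≤ 1 / (2 * μ) * ‖v‖ ^ 2 := by positivity
  constructor <;> linarith

end Conjugate

theorem ConvexOn.convex_image_epigraph {E F : Type*} [AddCommGroup E] [Module ℝ E]
    [AddCommGroup F] [Module ℝ F] {f : E → ℝ} (hf : ConvexOn ℝ univ f) (T : E →ₗ[ℝ] F) (b : F) :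
    Convex ℝ ((fun p : E × ℝ ↦ (T p.1 + b, p.2)) '' {p | f p.1 ≤ p.2}) := by
  let φ : E × ℝ →ᵃ[ℝ] F × ℝ :=
    (T.prodMap LinearMap.id).toAffineMap + AffineMap.const ℝ (E × ℝ) (b, 0)
  have hconv := hf.convex_epigraph.affine_image φ
  simp only [mem_univ, true_and] at hconv
  rwa [image_congr (g := φ) fun p _ ↦ by simp [φ]]

section LagrangeMultiplier

variable {E F : Type*} [AddCommGroup E] [Module ℝ E] [NormedAddCommGroup F]
  [InnerProductSpace ℝ F] {f : E → ℝ} {T : E →ₗ[ℝ] F} {b : F} {K : Set F} {xopt : E}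

theorem ConvexOn.exists_separating_functional (hf : ConvexOn ℝ univ f) (hK : Convex ℝ K)
    (hxmin : ∀ x, T x + b ∈ K → f xopt ≤ f x) :
    ∃ (ψ : StrongDual ℝ F) (α u : ℝ), (∀ k ∈ interior K, ∀ r < f xopt, ψ k + r * α < u) ∧
      ∀ x, u ≤ ψ (T x + b) + f x * α := by
  have hdisj : Disjoint (interior K ×ˢ Iio (f xopt))
      ((fun p : E × ℝ ↦ (T p.1 + b, p.2)) '' {p | f p.1 ≤ p.2}) := by
    rw [Set.disjoint_left]
    rintro _ ⟨hk, hlt⟩ ⟨⟨x, r⟩, hle, rfl⟩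
    exact (hxmin x (interior_subset hk)).not_gt (lt_of_le_of_lt hle hlt)
  obtain ⟨ℓ, u, hS, hA⟩ := geometric_hahn_banach_open (E := F × ℝ)
    (hK.interior.prod (convex_Iio _)) (isOpen_interior.prod isOpen_Iio)
    (hf.convex_image_epigraph T b) hdisj
  obtain ⟨ψ, α, hℓ⟩ : ∃ (ψ : StrongDual ℝ F) (α : ℝ), ∀ k r, ℓ (k, r) = ψ k + r * α :=
    ⟨ℓ.comp (ContinuousLinearMap.inl ℝ F ℝ), ℓ (0, 1), fun k r ↦ by
      rw [show (k, r) = (k, 0) + r • ((0 : F), (1 : ℝ)) by simp, map_add, map_smul, smul_eq_mul]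
      rfl⟩
  refine ⟨ψ, α, u, fun k hk r hr ↦ ?_, fun x ↦ ?_⟩
  · simpa [hℓ] using hS (k, r) ⟨hk, hr⟩
  · simpa [hℓ] using hA _ ⟨(x, f x), le_refl (f x), rfl⟩

theorem exists_lagrange_multiplier [CompleteSpace F] (hf : ConvexOn ℝ univ f) (hK : Convex ℝ K)
    (hcone : ∀ c : ℝ, 0 ≤ c → ∀ k ∈ K, c • k ∈ K) (hslater : ∃ x, T x + b ∈ interior K)
    (hxmin : ∀ x, T x + b ∈ K → f xopt ≤ f x) :
    ∃ y, (∀ k ∈ K, 0 ≤ ⟪k, y⟫) ∧ ∀ x, f xopt ≤ f x - ⟪T x + b, y⟫ := by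
  obtain ⟨xbar, hxbar⟩ := hslater
  obtain ⟨ψ, α, u, hS, hA⟩ := hf.exists_separating_functional hK hxmin
  have hclosure : ∀ k ∈ K, ψ k + f xopt * α ≤ u := by
    intro k hk
    have hsub : closure (interior K ×ˢ Iio (f xopt)) ⊆ {p | ψ p.1 + p.2 * α ≤ u} :=
      closure_minimal (fun p hp ↦ (hS p.1 hp.1 p.2 hp.2).le)
        (isClosed_le (by fun_prop) continuous_const)
    rw [closure_prod_eq, hK.closure_interior_eq_closure_of_nonempty_interior ⟨_, hxbar⟩,
      closure_Iio] at hsub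
    exact hsub (show (k, f xopt) ∈ closure K ×ˢ Iic (f xopt) from
      ⟨subset_closure hk, self_mem_Iic⟩)
  have hψ : ∀ k ∈ K, ψ k ≤ 0 := by
    intro k hk
    by_contra! hpos
    have := hclosure _ (hcone ((|u - f xopt * α| + 1) / ψ k) (by positivity) k hk)
    rw [map_smul, smul_eq_mul, div_mul_cancel₀ _ hpos.ne'] at this
    linarith [le_abs_self (u - f xopt * α)]
  have hu : f xopt * α ≤ u := by
    simpa using hclosure 0 (by simpa using hcone 0 le_rfl _ (interior_subset hxbar))
  -- at Slater's point the two separation inequalities force `α > 0`: no vertical hyperplane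
  have hα : 0 < α := by
    have := hxmin xbar (interior_subset hxbar)
    nlinarith [hS _ hxbar (f xopt - 1) (by linarith), hA xbar]
  refine ⟨-α⁻¹ • (InnerProductSpace.toDual ℝ F).symm ψ, fun k hk ↦ ?_, fun x ↦ ?_⟩
  · rw [real_inner_smul_right, real_inner_comm, InnerProductSpace.toDual_symm_apply]
    have := inv_pos.2 hα
    nlinarith [hψ k hk]
  · rw [real_inner_smul_right, real_inner_comm, InnerProductSpace.toDual_symm_apply]
    have := hu.trans (hA x)
    field_simp
    nlinarith

end LagrangeMultiplier

section DualObjective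

variable {n m : ℕ} {f : EuclideanSpace ℝ (Fin n) → ℝ}
  {T : EuclideanSpace ℝ (Fin n) →L[ℝ] EuclideanSpace ℝ (Fin m)} {b y : EuclideanSpace ℝ (Fin m)}
  {xopt : EuclideanSpace ℝ (Fin n)}

theorem dualObj_le_neg_of_forall_le (hy : ∀ x, f xopt ≤ f x - ⟪T x + b, y⟫) :
    dualObj f T b y ≤ -f xopt := by
  have : fenchelConj f (T.adjoint y) ≤ -f xopt - ⟪b, y⟫ := ciSup_le fun x ↦ by
    have := hy x
    rw [ContinuousLinearMap.adjoint_inner_left, real_inner_comm]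
    rw [inner_add_left] at this
    linarith
  rw [dualObj]
  linarith

theorem StrongConvexOn.mul_sq_norm_gradient_fenchelConj_sub_le {μ : ℝ}
    (hf : StrongConvexOn univ μ f) (hμ : 0 < μ) (hy : 0 ≤ ⟪T xopt + b, y⟫) :
    μ / 2 * ‖gradient (fenchelConj f) (T.adjoint y) - xopt‖ ^ 2 ≤ dualObj f T b y + f xopt := by
  obtain ⟨z, hz⟩ := hf.exists_forall_inner_sub_le hμ (T.adjoint y)
  have := hf.inner_sub_add_sq_le hz xopt
  rw [(hf.hasGradientAt_fenchelConj hμ hz).gradient, dualObj, fenchelConj_eq_of_forall_le hz,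
    norm_sub_rev]
  rw [ContinuousLinearMap.adjoint_inner_left, real_inner_comm] at this
  rw [inner_add_left] at hy
  linarith

end DualObjective

theorem stmt_17_general {n m : ℕ} (μ : ℝ) (hμ : 0 < μ)
    (f : EuclideanSpace ℝ (Fin n) → ℝ)
    (hf : ∀ x y : EuclideanSpace ℝ (Fin n), ∀ θ : ℝ, 0 ≤ θ → θ ≤ 1 →
      f (θ • x + (1 - θ) • y)
        ≤ θ * f x + (1 - θ) * f y - μ / 2 * θ * (1 - θ) * ‖x - y‖ ^ 2)
    (T : EuclideanSpace ℝ (Fin n) →L[ℝ] EuclideanSpace ℝ (Fin m))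
    (lam : ℝ) (hlampos : 0 < lam)
    (hlam : IsGreatest {c : ℝ | ∀ v : EuclideanSpace ℝ (Fin n),
      c * ‖v‖ ^ 2 ≤ ⟪ContinuousLinearMap.adjoint T (T v), v⟫} lam)
    (b : EuclideanSpace ℝ (Fin m)) (K : Set (EuclideanSpace ℝ (Fin m)))
    (hconv : Convex ℝ K)
    (hcone : ∀ (c : ℝ), 0 ≤ c → ∀ x ∈ K, c • x ∈ K)
    (hslater : ∃ xbar : EuclideanSpace ℝ (Fin n), T xbar + b ∈ interior K)
    (xopt : EuclideanSpace ℝ (Fin n))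
    (hxfeas : T xopt + b ∈ K)
    (hxmin : ∀ x : EuclideanSpace ℝ (Fin n), T x + b ∈ K → f xopt ≤ f x)
    (e : EuclideanSpace ℝ (Fin m))
    (cD : ℝ)
    (yopt : EuclideanSpace ℝ (Fin m))
    (hyoptmin : ∀ y : EuclideanSpace ℝ (Fin m), (∀ x ∈ K, 0 ≤ ⟪x, y⟫) →
      dualObj f T b yopt ≤ dualObj f T b y)
    (y : ℕ → EuclideanSpace ℝ (Fin m))
    (hyK : ∀ k, (∀ x ∈ K, 0 ≤ ⟪x, y k⟫) ∧ ⟪e, y k⟫ ≤ cD) :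
    ∀ k : ℕ,
      ‖gradient (fenchelConj f) (ContinuousLinearMap.adjoint T (y k)) - xopt‖
        ≤ Real.sqrt (2 * ‖T‖ ^ 2 / (μ * lam)) *
          Real.sqrt (dualObj f T b (y k) - dualObj f T b yopt) := by
  have hsc : StrongConvexOn univ μ f := ⟨convex_univ, fun x _ y _ a c ha hc hac ↦ by
    obtain rfl : c = 1 - a := by linarith
    refine (hf x y a ha (by linarith)).trans_eq ?_
    simp only [smul_eq_mul]
    ring⟩
  obtain ⟨yh, hyhK, hyh⟩ := exists_lagrange_multiplier
    (T := (T : EuclideanSpace ℝ (Fin n) →ₗ[ℝ] EuclideanSpace ℝ (Fin m)))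
    (hsc.convexOn fun r ↦ by dsimp; positivity) hconv hcone hslater hxmin
  have hdual : dualObj f T b yopt ≤ -f xopt :=
    (hyoptmin yh hyhK).trans (dualObj_le_neg_of_forall_le hyh)
  intro k
  set d := gradient (fenchelConj f) (ContinuousLinearMap.adjoint T (y k)) - xopt
  have hgap := hsc.mul_sq_norm_gradient_fenchelConj_sub_le hμ ((hyK k).1 _ hxfeas)
  have hlamT : lam * ‖d‖ ^ 2 ≤ ‖T‖ ^ 2 * ‖d‖ ^ 2 := by
    have := hlam.1 d
    rw [ContinuousLinearMap.adjoint_inner_left, real_inner_self_eq_norm_sq] at this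
    exact this.trans (by rw [← mul_pow]; gcongr; exact T.le_opNorm d)
  rw [← Real.sqrt_mul (by positivity)]
  refine Real.le_sqrt_of_sq_le ?_
  rw [div_mul_eq_mul_div, le_div_iff₀ (by positivity)]
  nlinarith

/-- Rate of convergence: under the assumptions of Statement 16 and
with `T*T` positive definite (with minimum eigenvalue `lam > 0`, characterized as the
greatest constant with `lam ‖v‖² ≤ ⟨T*T v, v⟩`), every dual-feasible `y_k` with
`⟨e,y_k⟩ ≤ c_D` and `x_k = ∇f*(T* y_k)` satisfies
`‖x_k - x_opt‖ ≤ sqrt(2‖T‖² / (μ lam)) · sqrt(h(y_k) - d*)`. -/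
theorem stmt_17 {n m : ℕ} (μ : ℝ) (hμ : 0 < μ)
    (f : EuclideanSpace ℝ (Fin n) → ℝ)
    (hf : ∀ x y : EuclideanSpace ℝ (Fin n), ∀ θ : ℝ, 0 ≤ θ → θ ≤ 1 →
      f (θ • x + (1 - θ) • y)
        ≤ θ * f x + (1 - θ) * f y - μ / 2 * θ * (1 - θ) * ‖x - y‖ ^ 2)
    (T : EuclideanSpace ℝ (Fin n) →L[ℝ] EuclideanSpace ℝ (Fin m))
    (hTT : ∀ v : EuclideanSpace ℝ (Fin n), v ≠ 0 →
      0 < ⟪ContinuousLinearMap.adjoint T (T v), v⟫)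
    (lam : ℝ) (hlampos : 0 < lam)
    (hlam : IsGreatest {c : ℝ | ∀ v : EuclideanSpace ℝ (Fin n),
      c * ‖v‖ ^ 2 ≤ ⟪ContinuousLinearMap.adjoint T (T v), v⟫} lam)
    (b : EuclideanSpace ℝ (Fin m)) (K : Set (EuclideanSpace ℝ (Fin m)))
    (hclosed : IsClosed K) (hconv : Convex ℝ K)
    (hcone : ∀ (c : ℝ), 0 ≤ c → ∀ x ∈ K, c • x ∈ K)
    (hpointed : K ∩ (-K) = {0}) (hfull : (interior K).Nonempty)
    (hslater : ∃ xbar : EuclideanSpace ℝ (Fin n), T xbar + b ∈ interior K)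
    (xopt : EuclideanSpace ℝ (Fin n))
    (hxfeas : T xopt + b ∈ K)
    (hxmin : ∀ x : EuclideanSpace ℝ (Fin n), T x + b ∈ K → f xopt ≤ f x)
    (e : EuclideanSpace ℝ (Fin m)) (he : e ∈ interior K)
    (cD : ℝ) (hcD : 0 < cD)
    (yopt : EuclideanSpace ℝ (Fin m))
    (hyoptK : ∀ x ∈ K, 0 ≤ ⟪x, yopt⟫)
    (hyoptmin : ∀ y : EuclideanSpace ℝ (Fin m), (∀ x ∈ K, 0 ≤ ⟪x, y⟫) →
      dualObj f T b yopt ≤ dualObj f T b y)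
    (hyoptcd : ⟪e, yopt⟫ ≤ cD)
    (y : ℕ → EuclideanSpace ℝ (Fin m))
    (hyK : ∀ k, (∀ x ∈ K, 0 ≤ ⟪x, y k⟫) ∧ ⟪e, y k⟫ ≤ cD) :
    ∀ k : ℕ,
      ‖gradient (fenchelConj f) (ContinuousLinearMap.adjoint T (y k)) - xopt‖
        ≤ Real.sqrt (2 * ‖T‖ ^ 2 / (μ * lam)) *
          Real.sqrt (dualObj f T b (y k) - dualObj f T b yopt) :=
  stmt_17_general μ hμ f hf T lam hlampos hlam b K hconv hcone hslater xopt hxfeas hxmin e cD yopt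
    hyoptmin y hyK
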